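/- arXiv:2510.04943 — 2 statements merged into one kernel-verified Lean document; each statement's English description precedes it below -/
import Mathlib

section
/- Let a, b, c, d_1,...,d_7 be order-two self-adjoint unitaries in a *-algebra satisfying the linear relations a d_1 d_2 = 1, b d_2 d_3 = 1, d_3 d_4 d_5 = 1, a d_5 d_6 = 1, c d_6 d_7 = 1, d_1 d_4 d_7 = 1, together with commutation of each pair of distinct generators appearing in a common relation. Then the conjugacy relation a b a = c holds. -/
/-- An order-two self-adjoint unitary in a `*`-algebra. -/
def IsSAInvolution {A : Type*} [Monoid A] [StarMul A] (x : A) : Prop :=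
  star x = x ∧ x * x = 1

lemma invol_left_cancel {A : Type*} [Monoid A] {x y : A} (hx : x * x = 1)
    (h : x * y = 1) : y = x := by
  calc y = 1 * y := (one_mul y).symm
    _ = (x * x) * y := by rw [hx]
    _ = x * (x * y) := mul_assoc _ _ _
    _ = x * 1 := by rw [h]
    _ = x := mul_one x

lemma invol_right_cancel {A : Type*} [Monoid A] {x y : A} (hy : y * y = 1)
    (h : x * y = 1) : x = y := by
  calc x = x * 1 := (mul_one x).symm
    _ = x * (y * y) := by rw [hy]
    _ = (x * y) * y := (mul_assoc _ _ _).symm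
    _ = 1 * y := by rw [h]
    _ = y := one_mul y

/-- order-two self-adjoint unitaries `a, b, c, d₁, …, d₇` satisfying the six
linear relations `a d₁ d₂ = b d₂ d₃ = d₃ d₄ d₅ = a d₅ d₆ = c d₆ d₇ = d₁ d₄ d₇ = 1`,
together with commutation of each pair of distinct generators appearing in a common
relation, satisfy the conjugacy relation `a b a = c`. -/
theorem conjugacy_from_linear_relations {A : Type*} [Monoid A] [StarMul A]
    (a b c d₁ d₂ d₃ d₄ d₅ d₆ d₇ : A)
    (ha : IsSAInvolution a) (hb : IsSAInvolution b) (hc : IsSAInvolution c)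
    (hd₁ : IsSAInvolution d₁) (hd₂ : IsSAInvolution d₂) (hd₃ : IsSAInvolution d₃)
    (hd₄ : IsSAInvolution d₄) (hd₅ : IsSAInvolution d₅) (hd₆ : IsSAInvolution d₆)
    (hd₇ : IsSAInvolution d₇)
    -- the six linear relations
    (r₁ : a * d₁ * d₂ = 1) (r₂ : b * d₂ * d₃ = 1) (r₃ : d₃ * d₄ * d₅ = 1)
    (r₄ : a * d₅ * d₆ = 1) (r₅ : c * d₆ * d₇ = 1) (r₆ : d₁ * d₄ * d₇ = 1)
    -- commutation of each pair of generators occurring in a common relation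
    (c₁ : a * d₁ = d₁ * a) (c₂ : a * d₂ = d₂ * a) (c₃ : d₁ * d₂ = d₂ * d₁)
    (c₄ : b * d₂ = d₂ * b) (c₅ : b * d₃ = d₃ * b) (c₆ : d₂ * d₃ = d₃ * d₂)
    (c₇ : d₃ * d₄ = d₄ * d₃) (c₈ : d₃ * d₅ = d₅ * d₃) (c₉ : d₄ * d₅ = d₅ * d₄)
    (c₁₀ : a * d₅ = d₅ * a) (c₁₁ : a * d₆ = d₆ * a) (c₁₂ : d₅ * d₆ = d₆ * d₅)
    (c₁₃ : c * d₆ = d₆ * c) (c₁₄ : c * d₇ = d₇ * c) (c₁₅ : d₆ * d₇ = d₇ * d₆)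
    (c₁₆ : d₁ * d₄ = d₄ * d₁) (c₁₇ : d₁ * d₇ = d₇ * d₁) (c₁₈ : d₄ * d₇ = d₇ * d₄) :
    a * b * a = c := by
  have ea : d₁ * d₂ = a := invol_left_cancel ha.2 (by rw [← mul_assoc]; exact r₁)
  have eb : d₂ * d₃ = b := invol_left_cancel hb.2 (by rw [← mul_assoc]; exact r₂)
  have e3 : d₄ * d₅ = d₃ := invol_left_cancel hd₃.2 (by rw [← mul_assoc]; exact r₃)
  have ea' : d₅ * d₆ = a := invol_left_cancel ha.2 (by rw [← mul_assoc]; exact r₄)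
  have ec : d₆ * d₇ = c := invol_left_cancel hc.2 (by rw [← mul_assoc]; exact r₅)
  have h14 : d₁ * d₄ = d₇ := invol_right_cancel hd₇.2 r₆
  have h35 : d₃ * d₅ = d₄ := by rw [← e3, mul_assoc, hd₅.2, mul_one]
  calc a * b * a = (d₁ * d₂) * (d₂ * d₃) * (d₅ * d₆) := by rw [ea, eb, ea']
    _ = d₁ * ((d₂ * d₂) * (d₃ * (d₅ * d₆))) := by simp only [mul_assoc]
    _ = d₁ * (d₃ * (d₅ * d₆)) := by rw [hd₂.2, one_mul]
    _ = (d₁ * (d₃ * d₅)) * d₆ := by simp only [mul_assoc]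
    _ = (d₁ * d₄) * d₆ := by rw [h35]
    _ = d₇ * d₆ := by rw [h14]
    _ = d₆ * d₇ := c₁₅.symm
    _ = c := ec
end

section
/- Let x_1, x_2, x_3, y_1, y_2, y_3, z_1, z_2, z_3, w_1, w_2, w_3, f be order-two self-adjoint unitaries in a *-algebra satisfying: x_i = y_i z_i with x_i, y_i, z_i pairwise commuting (i = 1,2,3); x_i = f w_i with x_i, f, w_i pairwise commuting (i = 1,2,3); and the conjugacy relations f y_1 f = z_1, f y_2 f = z_2, f y_3 f = z_3, and w_1 y_2 w_1 = z_3. Then x_1 x_2 x_1 = x_3. -/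
private lemma conj_mul_aux {A : Type*} [Monoid A] (a b c : A) (ha : a * a = 1) :
    a * (b * c) * a = (a * b * a) * (a * c * a) := by
  have h : (a * b * a) * (a * c * a) = a * b * ((a * a) * (c * a)) := by
    simp only [mul_assoc]
  rw [h, ha, one_mul]; simp only [mul_assoc]

/-- with `x i, y i, z i, w i` (for `i = 1, 2, 3`, here `i : Fin 3`) and `f`
order-two self-adjoint unitaries satisfying `xᵢ yᵢ zᵢ = 1` (pairwise commuting),
`xᵢ f wᵢ = 1` (pairwise commuting), and the conjugacy relations `f yᵢ f = zᵢ` and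
`w₁ y₂ w₁ = z₃`, one has `x₁ x₂ x₁ = x₃`. -/
theorem x1x2x1_eq_x3 {A : Type*} [Monoid A] [StarMul A]
    (x y z w : Fin 3 → A) (f : A)
    (hx : ∀ i, IsSAInvolution (x i)) (hy : ∀ i, IsSAInvolution (y i))
    (hz : ∀ i, IsSAInvolution (z i)) (hw : ∀ i, IsSAInvolution (w i))
    (hf : IsSAInvolution f)
    -- `xᵢ = yᵢ zᵢ` with `xᵢ, yᵢ, zᵢ` pairwise commuting
    (hxyz : ∀ i, x i * y i * z i = 1)
    (cxy : ∀ i, x i * y i = y i * x i) (cxz : ∀ i, x i * z i = z i * x i)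
    (cyz : ∀ i, y i * z i = z i * y i)
    -- `xᵢ = f wᵢ` with `xᵢ, f, wᵢ` pairwise commuting
    (hxfw : ∀ i, x i * f * w i = 1)
    (cxf : ∀ i, x i * f = f * x i) (cxw : ∀ i, x i * w i = w i * x i)
    (cfw : ∀ i, f * w i = w i * f)
    -- conjugacy relations `f y₁ f = z₁`, `f y₂ f = z₂`, `f y₃ f = z₃`, `w₁ y₂ w₁ = z₃`
    (hconj : ∀ i, f * y i * f = z i)
    (hconj' : w 0 * y 1 * w 0 = z 2) :
    x 0 * x 1 * x 0 = x 2 := by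
  have hff : f * f = 1 := hf.2
  have hww : ∀ i, w i * w i = 1 := fun i => (hw i).2
  have hyy : ∀ i, y i * y i = 1 := fun i => (hy i).2
  have hzz : ∀ i, z i * z i = 1 := fun i => (hz i).2
  -- x i = f * w i
  have hxw : ∀ i, x i = f * w i := by
    intro i
    have h1 : x i * f = w i := by
      calc x i * f = x i * f * (w i * w i) := by rw [hww, mul_one]
        _ = (x i * f * w i) * w i := by simp only [mul_assoc]
        _ = w i := by rw [hxfw, one_mul]
    calc x i = x i * (f * f) := by rw [hff, mul_one]
      _ = (x i * f) * f := by rw [mul_assoc]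
      _ = w i * f := by rw [h1]
      _ = f * w i := (cfw i).symm
  -- x i = y i * z i
  have hxyz' : ∀ i, x i = y i * z i := by
    intro i
    have h1 : x i * y i = z i := by
      calc x i * y i = x i * y i * (z i * z i) := by rw [hzz, mul_one]
        _ = (x i * y i * z i) * z i := by simp only [mul_assoc]
        _ = z i := by rw [hxyz, one_mul]
    calc x i = x i * (y i * y i) := by rw [hyy, mul_one]
      _ = (x i * y i) * y i := by rw [mul_assoc]
      _ = z i * y i := by rw [h1]
      _ = y i * z i := (cyz i).symm
  -- w0 * z1 * w0 = y2
  have hfz : ∀ i, f * z i * f = y i := by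
    intro i
    rw [← hconj i]
    calc f * (f * y i * f) * f = (f * f) * y i * (f * f) := by simp only [mul_assoc]
      _ = y i := by rw [hff, one_mul, mul_one]
  have hc : ∀ a : A, w 0 * (f * a) = f * (w 0 * a) := fun a => by
    rw [← mul_assoc, ← cfw 0, mul_assoc]
  have hwz : w 0 * z 1 * w 0 = y 2 := by
    rw [← hconj 1]
    simp only [mul_assoc]
    rw [cfw 0, hc]
    have h2 : w 0 * (y 1 * (w 0 * f)) = z 2 * f := by
      rw [← mul_assoc, ← mul_assoc, hconj']
    rw [h2, ← mul_assoc, hfz 2]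
  -- main computation
  calc x 0 * x 1 * x 0
      = (f * w 0) * (y 1 * z 1) * (f * w 0) := by rw [hxw 0, hxyz' 1]
    _ = f * (w 0 * (y 1 * z 1) * w 0) * f := by
        simp only [mul_assoc]; rw [cfw 0]
    _ = f * ((w 0 * y 1 * w 0) * (w 0 * z 1 * w 0)) * f := by
        rw [conj_mul_aux _ _ _ (hww 0)]
    _ = f * (z 2 * y 2) * f := by rw [hconj', hwz]
    _ = (f * z 2 * f) * (f * y 2 * f) := conj_mul_aux _ _ _ hff
    _ = y 2 * z 2 := by rw [hfz, hconj]
    _ = x 2 := (hxyz' 2).symm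
end
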